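/- arXiv:1910.02466 — 2 statements merged into one kernel-verified Lean document; each statement's English description precedes it below -/
import Mathlib

section
/- If h₀ ≥ 0, then the component g of the maximal solution (h, f, g) of the forward ODE system satisfies the global lower bound g(t) ≥ min((a σ_D² C₁/2)·t, C₂) for all t in the maximal interval of existence [0, τ(h₀)). -/
/-!
Everything follows from comparison with barriers at first contact. Since `h' = (2g/α) h` is
linear in `h`, `h` stays nonnegative. Then `f' ≥ 1 - C₀ f > 0` whenever `0 ≤ f < C₁`, so
`f ≥ C₁`. Consequently, while `0 ≤ g ≤ C₂`, the choice of `C₂` gives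
`g' ≥ a σ_D² C₁ - (2/α) g² - C₀ g ≥ a σ_D² C₁ / 2`: `g` climbs at least at this rate until it
reaches `C₂`, and can never fall below `C₂` afterwards.
-/

open Set

/-- The forward ODE system of Proposition A.1: on a set `s ⊆ ℝ`,
`h' = (2g/α)·h` with `h 0 = h₀`, `f' = 1 + f·((a²σ_D²/(2I))·h − C₀)` with `f 0 = 1`,
and `g' = aσ_D²·f − (2/α)·g² + g·((a²σ_D²/(2I))·h − C₀)` with `g 0 = 0`. -/
def FwdSol (I : ℕ) (C₀ a σD α h₀ : ℝ) (h f g : ℝ → ℝ) (s : Set ℝ) : Prop :=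
  h 0 = h₀ ∧ f 0 = 1 ∧ g 0 = 0 ∧
    ∀ t ∈ s,
      HasDerivWithinAt h (2 * g t / α * h t) s t ∧
      HasDerivWithinAt f (1 + f t * (a ^ 2 * σD ^ 2 / (2 * (I : ℝ)) * h t - C₀)) s t ∧
      HasDerivWithinAt g
        (a * σD ^ 2 * f t - 2 / α * g t ^ 2 +
          g t * (a ^ 2 * σD ^ 2 / (2 * (I : ℝ)) * h t - C₀)) s t

section Barriers

variable {y Y : ℝ → ℝ} {a b : ℝ}

theorem boundary_le_image_of_deriv_boundary_lt_deriv_right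
    (hy : ContinuousOn y (Icc a b)) (hy' : ∀ x ∈ Ico a b, HasDerivWithinAt y (Y x) (Ici x) x)
    {B B' : ℝ → ℝ} (ha : B a ≤ y a) (hB : ContinuousOn B (Icc a b))
    (hB' : ∀ x ∈ Ico a b, HasDerivWithinAt B (B' x) (Ici x) x)
    (bound : ∀ x ∈ Ico a b, y x = B x → B' x < Y x) : ∀ ⦃x⦄, x ∈ Icc a b → B x ≤ y x := by
  intro x hx
  have := image_le_of_deriv_right_lt_deriv_boundary' (f := fun z => -y z) (B := fun z => -B z)
    hy.neg (fun z hz => (hy' z hz).neg) (neg_le_neg ha) hB.neg (fun z hz => (hB' z hz).neg)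
    (fun z hz hyz => neg_lt_neg (bound z hz (neg_inj.1 hyz))) hx
  exact neg_le_neg_iff.1 this

theorem nonneg_of_deriv_right_ge_mul {c : ℝ → ℝ}
    (hy : ContinuousOn y (Icc a b)) (hy' : ∀ x ∈ Ico a b, HasDerivWithinAt y (Y x) (Ici x) x)
    (hc : ContinuousOn c (Icc a b)) (ha : 0 ≤ y a)
    (hY : ∀ x ∈ Ico a b, y x < 0 → c x * y x ≤ Y x) : ∀ ⦃x⦄, x ∈ Icc a b → 0 ≤ y x := by
  obtain ⟨K, hK⟩ := isCompact_Icc.exists_bound_of_continuousOn hc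
  intro x hx
  refine le_of_forall_pos_le_add fun δ hδ => ?_
  -- With `|c| ≤ K`, at a contact point `y z = B z < 0` we get `B' z = (K+1) y z < c z y z ≤ Y z`.
  have barrier := boundary_le_image_of_deriv_boundary_lt_deriv_right hy hy'
    (B := fun z => -δ * Real.exp ((K + 1) * (z - x)))
    (B' := fun z => -δ * (Real.exp ((K + 1) * (z - x)) * ((K + 1) * 1)))
    (by nlinarith [Real.exp_pos ((K + 1) * (a - x))]) (by fun_prop)
    (fun z _ => ((((hasDerivAt_id z).sub_const x).const_mul (K + 1)).exp.const_mul
      (-δ)).hasDerivWithinAt)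
    (fun z hz hyz => by
      have hE := Real.exp_pos ((K + 1) * (z - x))
      have hcK : c z ≤ K := (le_abs_self _).trans (hK z (Ico_subset_Icc_self hz))
      have hneg : y z < 0 := by rw [hyz]; nlinarith
      have hB' : -δ * (Real.exp ((K + 1) * (z - x)) * ((K + 1) * 1)) = K * y z + y z := by
        rw [hyz]; ring
      linarith [hY z hz hneg, mul_le_mul_of_nonpos_right hcK hneg.le]) hx
  simp only [sub_self, mul_zero, Real.exp_zero, mul_one] at barrier
  linarith

theorem le_of_deriv_right_pos_below {L C : ℝ}
    (hy : ContinuousOn y (Icc a b)) (hy' : ∀ x ∈ Ico a b, HasDerivWithinAt y (Y x) (Ici x) x)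
    (ha : C ≤ y a) (hLC : L < C) (hY : ∀ x ∈ Ico a b, L ≤ y x → y x < C → 0 < Y x) :
    ∀ ⦃x⦄, x ∈ Icc a b → C ≤ y x := by
  intro x hx
  refine le_of_forall_sub_le fun ε hε => ?_
  have hδ : 0 < min ε (C - L) := lt_min hε (by linarith)
  have barrier := boundary_le_image_of_deriv_boundary_lt_deriv_right hy hy'
    (B := fun _ => C - min ε (C - L)) (B' := fun _ => 0) (by linarith) continuousOn_const
    (fun z _ => hasDerivWithinAt_const _ _ _)
    (fun z hz hyz => hY z hz (by rw [hyz]; linarith [min_le_right ε (C - L)])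
      (by rw [hyz]; linarith)) hx
  linarith [min_le_left ε (C - L)]

theorem min_mul_le_of_deriv_right_gt {c C : ℝ}
    (hy : ContinuousOn y (Icc 0 b)) (hy' : ∀ x ∈ Ico 0 b, HasDerivWithinAt y (Y x) (Ici x) x)
    (h0 : 0 ≤ y 0) (hc : 0 < c) (hC : 0 ≤ C)
    (hY : ∀ x ∈ Ico 0 b, 0 ≤ y x → y x ≤ C → c < Y x) :
    ∀ ⦃x⦄, x ∈ Icc 0 b → min (c * x) C ≤ y x := by
  set s := C / c
  have hcs : c * s = C := mul_div_cancel₀ C hc.ne'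
  have ramp : ∀ ⦃x⦄, x ∈ Icc 0 (min b s) → c * x ≤ y x :=
    boundary_le_image_of_deriv_boundary_lt_deriv_right
      (hy.mono (Icc_subset_Icc_right (min_le_left _ _)))
      (fun x hx => hy' x ⟨hx.1, hx.2.trans_le (min_le_left _ _)⟩) (by simpa using h0)
      (by fun_prop) (fun x _ => ((hasDerivAt_id x).const_mul c).hasDerivWithinAt)
      (fun x hx hyx => by
        have hxs : x < s := hx.2.trans_le (min_le_right _ _)
        refine lt_of_eq_of_lt (mul_one c) (hY x ⟨hx.1, hx.2.trans_le (min_le_left _ _)⟩ ?_ ?_)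
        · rw [hyx]; exact mul_nonneg hc.le hx.1
        · rw [hyx, ← hcs]; exact mul_le_mul_of_nonneg_left hxs.le hc.le)
  intro x hx
  rcases le_total x s with hxs | hsx
  · exact (min_le_left _ _).trans (ramp ⟨hx.1, le_min hx.2 hxs⟩)
  · have hys : C ≤ y s := hcs ▸ ramp ⟨div_nonneg hC hc.le, le_min (hsx.trans hx.2) le_rfl⟩
    have plateau : ∀ ⦃z⦄, z ∈ Icc s b → C ≤ y z :=
      boundary_le_image_of_deriv_boundary_lt_deriv_right
        (hy.mono (Icc_subset_Icc_left (div_nonneg hC hc.le)))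
        (fun z hz => hy' z ⟨(div_nonneg hC hc.le).trans hz.1, hz.2⟩) hys continuousOn_const
        (fun z _ => hasDerivWithinAt_const _ _ _)
        (fun z hz hyz => hc.trans (hY z ⟨(div_nonneg hC hc.le).trans hz.1, hz.2⟩
          (hyz ▸ hC) hyz.le))
    exact (min_le_right _ _).trans (plateau ⟨hsx, hx.2⟩)

theorem min_mul_le_of_deriv_right_ge {c C : ℝ}
    (hy : ContinuousOn y (Icc 0 b)) (hy' : ∀ x ∈ Ico 0 b, HasDerivWithinAt y (Y x) (Ici x) x)
    (h0 : 0 ≤ y 0) (hc : 0 < c) (hC : 0 ≤ C)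
    (hY : ∀ x ∈ Ico 0 b, 0 ≤ y x → y x ≤ C → c ≤ Y x) :
    ∀ ⦃x⦄, x ∈ Icc 0 b → min (c * x) C ≤ y x := by
  intro x hx
  have hcont : Continuous fun c' : ℝ => min (c' * x) C := by fun_prop
  refine le_of_tendsto (hcont.tendsto c |>.mono_left (nhdsWithin_le_nhds (s := Iio c))) ?_
  filter_upwards [Ioo_mem_nhdsLT hc] with c' hc'
  exact min_mul_le_of_deriv_right_gt hy hy' h0 hc'.1 hC
    (fun z hz h₁ h₂ => hc'.2.trans_le (hY z hz h₁ h₂)) hx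

end Barriers

/-- For `C₀ ≥ 0` this is the positive root of `(2/α) x² + C₀ x = D/2`; for `C₀ < 0` it is the
positive root of `(2/α) x² + C₀ x = 0`. -/
noncomputable def quadThreshold (α C₀ D : ℝ) : ℝ :=
  if C₀ < 0 then -(α * C₀) / 2 else α * (-C₀ + √(C₀ ^ 2 + 4 * D / α)) / 4

theorem quadThreshold_nonneg {α C₀ D : ℝ} (hα : 0 ≤ α) (hD : 0 ≤ D) :
    0 ≤ quadThreshold α C₀ D := by
  unfold quadThreshold
  split_ifs with hC₀
  · nlinarith
  · have : C₀ ≤ √(C₀ ^ 2 + 4 * D / α) :=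
      Real.le_sqrt_of_sq_le (le_add_of_nonneg_right (by positivity))
    have : 0 ≤ -C₀ + √(C₀ ^ 2 + 4 * D / α) := by linarith
    positivity

theorem two_div_mul_sq_add_mul_le_of_le_quadThreshold {α C₀ D x : ℝ} (hα : 0 < α)
    (hD : 0 ≤ D) (hx₀ : 0 ≤ x) (hx : x ≤ quadThreshold α C₀ D) :
    2 / α * x ^ 2 + C₀ * x ≤ D / 2 := by
  unfold quadThreshold at hx
  split_ifs at hx with hC₀
  · have : 2 / α * x + C₀ ≤ 0 := by
      rw [div_mul_eq_mul_div, div_add' _ _ _ hα.ne']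
      exact div_nonpos_of_nonpos_of_nonneg (by linarith) hα.le
    nlinarith [mul_nonpos_of_nonneg_of_nonpos hx₀ this]
  · push Not at hC₀
    have hs : α * √(C₀ ^ 2 + 4 * D / α) ^ 2 = α * C₀ ^ 2 + 4 * D := by
      rw [Real.sq_sqrt (by positivity)]
      field_simp
    set s := √(C₀ ^ 2 + 4 * D / α)
    calc 2 / α * x ^ 2 + C₀ * x
        ≤ 2 / α * (α * (-C₀ + s) / 4) ^ 2 + C₀ * (α * (-C₀ + s) / 4) := by gcongr
      _ = D / 2 := by
        field_simp
        linear_combination 4 * hs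

section Restriction

variable {y Y : ℝ → ℝ} {a b t : ℝ}

theorem continuousOn_Icc_of_hasDerivWithinAt_Ico
    (hy : ∀ x ∈ Ico a b, HasDerivWithinAt y (Y x) (Ico a b) x) (ht : t < b) :
    ContinuousOn y (Icc a t) := fun x hx =>
  (hy x ⟨hx.1, hx.2.trans_lt ht⟩).continuousWithinAt.mono (Icc_subset_Ico_right ht)

theorem hasDerivWithinAt_Ici_of_Ico
    (hy : ∀ x ∈ Ico a b, HasDerivWithinAt y (Y x) (Ico a b) x) (ht : t ≤ b) :
    ∀ x ∈ Ico a t, HasDerivWithinAt y (Y x) (Ici x) x := fun x hx =>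
  have hx' : x ∈ Ico a b := ⟨hx.1, hx.2.trans_le ht⟩
  (hy x hx').mono_of_mem_nhdsWithin (Ico_mem_nhdsGE_of_mem hx')

end Restriction

namespace FwdSol

variable {I : ℕ} {C₀ a σD α h₀ τ : ℝ} {h f g : ℝ → ℝ}

theorem h_nonneg (hsol : FwdSol I C₀ a σD α h₀ h f g (Ico 0 τ)) (hh₀ : 0 ≤ h₀) :
    ∀ t ∈ Ico 0 τ, 0 ≤ h t := by
  intro t ht
  have hh := fun x hx => (hsol.2.2.2 x hx).1
  have hg := fun x hx => (hsol.2.2.2 x hx).2.2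
  exact nonneg_of_deriv_right_ge_mul (Y := fun x => 2 * g x / α * h x) (c := fun x => 2 * g x / α)
    (continuousOn_Icc_of_hasDerivWithinAt_Ico hh ht.2) (hasDerivWithinAt_Ici_of_Ico hh ht.2.le)
    ((continuousOn_const.mul (continuousOn_Icc_of_hasDerivWithinAt_Ico hg ht.2)).div_const α)
    (hsol.1 ▸ hh₀) (fun _ _ _ => le_rfl) ⟨ht.1, le_rfl⟩

theorem inv_max_one_le_f (hsol : FwdSol I C₀ a σD α h₀ h f g (Ico 0 τ))
    (hh : ∀ t ∈ Ico 0 τ, 0 ≤ h t) : ∀ t ∈ Ico 0 τ, (max 1 C₀)⁻¹ ≤ f t := by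
  intro t ht
  have hf := fun x hx => (hsol.2.2.2 x hx).2.1
  have hM : 0 < max 1 C₀ := one_pos.trans_le (le_max_left _ _)
  refine le_of_deriv_right_pos_below (L := 0)
    (continuousOn_Icc_of_hasDerivWithinAt_Ico hf ht.2) (hasDerivWithinAt_Ici_of_Ico hf ht.2.le)
    (by rw [hsol.2.1]; exact inv_le_one_of_one_le₀ (le_max_left _ _)) (inv_pos.2 hM)
    (fun x hx hf₀ hfM => ?_) ⟨ht.1, le_rfl⟩
  have hfC₀ : f x * C₀ < 1 := calc
    f x * C₀ ≤ f x * max 1 C₀ := mul_le_mul_of_nonneg_left (le_max_right _ _) hf₀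
    _ < (max 1 C₀)⁻¹ * max 1 C₀ := mul_lt_mul_of_pos_right hfM hM
    _ = 1 := inv_mul_cancel₀ hM.ne'
  have hfh : 0 ≤ f x * (a ^ 2 * σD ^ 2 / (2 * (I : ℝ)) * h x) :=
    mul_nonneg hf₀ (mul_nonneg (by positivity) (hh x ⟨hx.1, hx.2.trans ht.2⟩))
  linarith [mul_sub (f x) (a ^ 2 * σD ^ 2 / (2 * (I : ℝ)) * h x) C₀]

end FwdSol

theorem stmt5_general (I : ℕ) (C₀ a σD α : ℝ)
    (ha : 0 < a) (hσD : 0 < σD) (hα : 0 < α)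
    (h₀ τ : ℝ) (hh₀ : 0 ≤ h₀) (h f g : ℝ → ℝ)
    (hsol : FwdSol I C₀ a σD α h₀ h f g (Ico 0 τ))
    (C₁ : ℝ) (hC₁ : C₁ = if C₀ ≤ 1 then 1 else 1 / C₀)
    (C₂ : ℝ) (hC₂ : C₂ = if C₀ < 0 then -(α * C₀) / 2
      else α * (-C₀ + Real.sqrt (C₀ ^ 2 + 4 * a * σD ^ 2 * C₁ / α)) / 4) :
    ∀ t ∈ Ico (0 : ℝ) τ, min (a * σD ^ 2 * C₁ / 2 * t) C₂ ≤ g t := by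
  have hC₁' : C₁ = (max 1 C₀)⁻¹ := by
    rw [hC₁]
    split_ifs with hC₀
    · rw [max_eq_left hC₀, inv_one]
    · rw [max_eq_right (not_le.1 hC₀).le, one_div]
  have hD : 0 < a * σD ^ 2 * C₁ := by
    rw [hC₁']
    have : 0 < max 1 C₀ := one_pos.trans_le (le_max_left _ _)
    positivity
  have hC₂' : C₂ = quadThreshold α C₀ (a * σD ^ 2 * C₁) := by
    rw [hC₂, quadThreshold, mul_assoc 4, mul_assoc 4]
  have hh := hsol.h_nonneg hh₀
  have hf := hsol.inv_max_one_le_f hh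
  intro t ht
  have hg := fun x hx => (hsol.2.2.2 x hx).2.2
  refine min_mul_le_of_deriv_right_ge
    (continuousOn_Icc_of_hasDerivWithinAt_Ico hg ht.2) (hasDerivWithinAt_Ici_of_Ico hg ht.2.le)
    hsol.2.2.1.ge (by positivity) (hC₂' ▸ quadThreshold_nonneg hα.le hD.le)
    (fun x hx hg₀ hgC₂ => ?_) ⟨ht.1, le_rfl⟩
  have hx : x ∈ Ico 0 τ := ⟨hx.1, hx.2.trans ht.2⟩
  have hquad := two_div_mul_sq_add_mul_le_of_le_quadThreshold hα hD.le hg₀ (hC₂' ▸ hgC₂)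
  have hfC₁ : a * σD ^ 2 * C₁ ≤ a * σD ^ 2 * f x :=
    mul_le_mul_of_nonneg_left (hC₁' ▸ hf x hx) (by positivity)
  have hgh : 0 ≤ g x * (a ^ 2 * σD ^ 2 / (2 * (I : ℝ)) * h x) :=
    mul_nonneg hg₀ (mul_nonneg (by positivity) (hh x hx))
  linarith [mul_sub (g x) (a ^ 2 * σD ^ 2 / (2 * (I : ℝ)) * h x) C₀]

/-- if `h₀ ≥ 0` then `g` satisfies the global lower bound
`g t ≥ min ((a σ_D² C₁/2)·t) C₂` on the (maximal) interval of existence `[0,τ)`. -/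
theorem stmt5 (I : ℕ) (hI : 1 ≤ I) (C₀ T a σD α k : ℝ)
    (hT : 0 < T) (ha : 0 < a) (hσD : 0 < σD) (hα : 0 < α) (hk : 0 < k)
    (h₀ τ : ℝ) (hh₀ : 0 ≤ h₀) (hτ : 0 < τ) (h f g : ℝ → ℝ)
    (hsol : FwdSol I C₀ a σD α h₀ h f g (Ico 0 τ))
    (C₁ : ℝ) (hC₁ : C₁ = if C₀ ≤ 1 then 1 else 1 / C₀)
    (C₂ : ℝ) (hC₂ : C₂ = if C₀ < 0 then -(α * C₀) / 2
      else α * (-C₀ + Real.sqrt (C₀ ^ 2 + 4 * a * σD ^ 2 * C₁ / α)) / 4) :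
    ∀ t ∈ Ico (0 : ℝ) τ, min (a * σD ^ 2 * C₁ / 2 * t) C₂ ≤ g t :=
  stmt5_general I C₀ a σD α ha hσD hα h₀ τ hh₀ h f g hsol C₁ hC₁ C₂ hC₂
end

section
/- Let 0 < h₀ < h̃₀ < k and let (h, f, g) and (h̃, f̃, g̃) be the maximal solutions of the forward ODE system with initial values h₀ and h̃₀ and maximal existence intervals [0, τ) and [0, τ̃), respectively. Then for all t ∈ (0, τ ∧ τ̃): h(t) < h̃(t), f(t) < f̃(t), and g(t) < g̃(t). -/
/-! The differences `u = h̃ - h`, `v = f̃ - f`, `w = g̃ - g` solve the linear system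
`u' = (2g/α) u + (2h̃/α) w`, `v' = (c h - C₀) v + c f̃ u`,
`w' = (c h - C₀ - (2/α)(g + g̃)) w + aσ_D² v + c g̃ u` with `c = a²σ_D²/(2I)`,
whose coupling coefficients are nonnegative because `h̃ > 0`, `f̃ > 0`, `g̃ ≥ 0`.
For a scalar equation `x' = p x + q` with `q ≥ 0` the function `x · exp (-∫ p)` is
nondecreasing, so `x` keeps the sign of `x 0`. Hence, as long as `u > 0`, also `v, w ≥ 0`,
which keeps `u` positive: `u` has no first zero. Once `u > 0` everywhere, the forcings of `v`
and then of `w` are strictly positive, which gives the strict inequalities. -/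

open Set

open Real Topology intervalIntegral

section LinearODE

variable {a b : ℝ} {x p q : ℝ → ℝ}

theorem continuousOn_mul_exp_neg_integral
    (hx : ∀ t ∈ Icc a b, HasDerivWithinAt x (p t * x t + q t) (Icc a b) t)
    (hp : ContinuousOn p (Icc a b)) :
    ContinuousOn (fun s => x s * exp (-∫ r in a..s, p r)) (Icc a b) := by
  rcases le_or_gt a b with hab | hba
  · have hP := continuousOn_primitive_interval'
      (hp.intervalIntegrable_of_Icc (μ := MeasureTheory.volume) hab) left_mem_uIcc
    rw [uIcc_of_le hab] at hP
    have hxc : ContinuousOn x (Icc a b) := fun t ht => (hx t ht).continuousWithinAt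
    exact hxc.mul (continuous_exp.comp_continuousOn hP.neg)
  · simp [Icc_eq_empty_of_lt hba]

theorem hasDerivAt_mul_exp_neg_integral
    (hx : ∀ t ∈ Icc a b, HasDerivWithinAt x (p t * x t + q t) (Icc a b) t)
    (hp : ContinuousOn p (Icc a b)) {t : ℝ} (ht : t ∈ Ioo a b) :
    HasDerivAt (fun s => x s * exp (-∫ r in a..s, p r)) (q t * exp (-∫ r in a..t, p r)) t := by
  have hmem : Icc a b ∈ 𝓝 t := Icc_mem_nhds ht.1 ht.2
  have hP : HasDerivAt (fun s => ∫ r in a..s, p r) (p t) t :=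
    integral_hasDerivAt_right
      ((hp.mono (Icc_subset_Icc le_rfl ht.2.le)).intervalIntegrable_of_Icc ht.1.le)
      ⟨Icc a b, hmem, hp.aestronglyMeasurable measurableSet_Icc⟩
      ((hp t (Ioo_subset_Icc_self ht)).continuousAt hmem)
  exact (((hx t (Ioo_subset_Icc_self ht)).hasDerivAt hmem).mul hP.neg.exp).congr_deriv
    (by simp only [Pi.neg_apply]; ring)

theorem monotoneOn_mul_exp_neg_integral
    (hx : ∀ t ∈ Icc a b, HasDerivWithinAt x (p t * x t + q t) (Icc a b) t)
    (hp : ContinuousOn p (Icc a b)) (hq : ∀ t ∈ Ioo a b, 0 ≤ q t) :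
    MonotoneOn (fun s => x s * exp (-∫ r in a..s, p r)) (Icc a b) := by
  refine monotoneOn_of_hasDerivWithinAt_nonneg (convex_Icc a b)
    (f' := fun t => q t * exp (-∫ r in a..t, p r))
    (continuousOn_mul_exp_neg_integral hx hp) (fun t ht => ?_) (fun t ht => ?_) <;>
    rw [interior_Icc] at ht
  · exact (hasDerivAt_mul_exp_neg_integral hx hp ht).hasDerivWithinAt
  · exact mul_nonneg (hq t ht) (exp_pos _).le

theorem strictMonoOn_mul_exp_neg_integral
    (hx : ∀ t ∈ Icc a b, HasDerivWithinAt x (p t * x t + q t) (Icc a b) t)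
    (hp : ContinuousOn p (Icc a b)) (hq : ∀ t ∈ Ioo a b, 0 < q t) :
    StrictMonoOn (fun s => x s * exp (-∫ r in a..s, p r)) (Icc a b) := by
  refine strictMonoOn_of_hasDerivWithinAt_pos (convex_Icc a b)
    (f' := fun t => q t * exp (-∫ r in a..t, p r))
    (continuousOn_mul_exp_neg_integral hx hp) (fun t ht => ?_) (fun t ht => ?_) <;>
    rw [interior_Icc] at ht
  · exact (hasDerivAt_mul_exp_neg_integral hx hp ht).hasDerivWithinAt
  · exact mul_pos (hq t ht) (exp_pos _)

theorem pos_of_hasDerivWithinAt_linear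
    (hx : ∀ t ∈ Icc a b, HasDerivWithinAt x (p t * x t + q t) (Icc a b) t)
    (hp : ContinuousOn p (Icc a b)) (hq : ∀ t ∈ Ioo a b, 0 ≤ q t) (hxa : 0 < x a) :
    ∀ t ∈ Icc a b, 0 < x t := by
  intro t ht
  have hmono :=
    monotoneOn_mul_exp_neg_integral hx hp hq (left_mem_Icc.2 (ht.1.trans ht.2)) ht ht.1
  simp only [integral_same, neg_zero, exp_zero, mul_one] at hmono
  exact pos_of_mul_pos_left (hxa.trans_le hmono) (exp_pos _).le

theorem nonneg_of_hasDerivWithinAt_linear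
    (hx : ∀ t ∈ Icc a b, HasDerivWithinAt x (p t * x t + q t) (Icc a b) t)
    (hp : ContinuousOn p (Icc a b)) (hq : ∀ t ∈ Ioo a b, 0 ≤ q t) (hxa : 0 ≤ x a) :
    ∀ t ∈ Icc a b, 0 ≤ x t := by
  intro t ht
  have hmono :=
    monotoneOn_mul_exp_neg_integral hx hp hq (left_mem_Icc.2 (ht.1.trans ht.2)) ht ht.1
  simp only [integral_same, neg_zero, exp_zero, mul_one] at hmono
  exact nonneg_of_mul_nonneg_left (hxa.trans hmono) (exp_pos _)

theorem pos_of_hasDerivWithinAt_linear_of_forcing_pos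
    (hx : ∀ t ∈ Icc a b, HasDerivWithinAt x (p t * x t + q t) (Icc a b) t)
    (hp : ContinuousOn p (Icc a b)) (hq : ∀ t ∈ Ioo a b, 0 < q t) (hxa : 0 ≤ x a) :
    ∀ t ∈ Ioc a b, 0 < x t := by
  intro t ht
  have hmono := strictMonoOn_mul_exp_neg_integral hx hp hq (left_mem_Icc.2 (ht.1.le.trans ht.2))
    (Ioc_subset_Icc_self ht) ht.1
  simp only [integral_same, neg_zero, exp_zero, mul_one] at hmono
  exact pos_of_mul_pos_left (hxa.trans_lt hmono) (exp_pos _).le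

end LinearODE

theorem ContinuousOn.forall_pos_of_forall_Ico_pos {φ : ℝ → ℝ} {a b : ℝ}
    (hφ : ContinuousOn φ (Icc a b)) (ha : 0 < φ a)
    (hstep : ∀ t ∈ Ioc a b, (∀ r ∈ Ico a t, 0 < φ r) → 0 < φ t) :
    ∀ t ∈ Icc a b, 0 < φ t := by
  by_contra! ⟨t, ht, hφt⟩
  set Z := Icc a b ∩ φ ⁻¹' Iic 0
  have hZne : Z.Nonempty := ⟨t, ht, hφt⟩
  have hZbdd : BddBelow Z := ⟨a, fun r hr => hr.1.1⟩
  obtain ⟨⟨has, hsb⟩, hφs⟩ : sInf Z ∈ Z :=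
    (hφ.preimage_isClosed_of_isClosed isClosed_Icc isClosed_Iic).csInf_mem hZne hZbdd
  have has' : a < sInf Z := has.lt_of_ne fun heq => (heq ▸ hφs).not_gt ha
  refine (hstep _ ⟨has', hsb⟩ fun r hr => ?_).not_ge hφs
  by_contra! hφr
  exact hr.2.not_ge (csInf_le hZbdd ⟨⟨hr.1, hr.2.le.trans hsb⟩, hφr⟩)

namespace FwdSol

variable {I : ℕ} {C₀ a σD α h₀ hb₀ b t : ℝ} {h f g hb fb gb : ℝ → ℝ} 
  {s s' : Set ℝ}

theorem mono (hsol : FwdSol I C₀ a σD α h₀ h f g s) (hs : s' ⊆ s) :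
    FwdSol I C₀ a σD α h₀ h f g s' := by
  obtain ⟨h0, f0, g0, hder⟩ := hsol
  refine ⟨h0, f0, g0, fun t ht => ?_⟩
  obtain ⟨dh, df, dg⟩ := hder t (hs ht)
  exact ⟨dh.mono hs, df.mono hs, dg.mono hs⟩

theorem continuousOn_h (hsol : FwdSol I C₀ a σD α h₀ h f g s) : ContinuousOn h s :=
  fun t ht => (hsol.2.2.2 t ht).1.continuousWithinAt

theorem continuousOn_g (hsol : FwdSol I C₀ a σD α h₀ h f g s) : ContinuousOn g s :=
  fun t ht => (hsol.2.2.2 t ht).2.2.continuousWithinAt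

theorem h_pos (hsol : FwdSol I C₀ a σD α h₀ h f g (Icc 0 b)) (hh₀ : 0 < h₀) :
    ∀ t ∈ Icc 0 b, 0 < h t :=
  pos_of_hasDerivWithinAt_linear (p := fun t => 2 * g t / α) (q := 0)
    (fun t ht => (hsol.2.2.2 t ht).1.congr_deriv (add_zero _).symm)
    ((continuousOn_const.mul hsol.continuousOn_g).div_const α) (fun _ _ => le_rfl)
    (hsol.1 ▸ hh₀)

theorem f_pos (hsol : FwdSol I C₀ a σD α h₀ h f g (Icc 0 b)) : ∀ t ∈ Icc 0 b, 0 < f t :=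
  pos_of_hasDerivWithinAt_linear (p := fun t => a ^ 2 * σD ^ 2 / (2 * (I : ℝ)) * h t - C₀)
    (q := 1) (fun t ht => (hsol.2.2.2 t ht).2.1.congr_deriv (by simp only [Pi.one_apply]; ring))
    ((continuousOn_const.mul hsol.continuousOn_h).sub continuousOn_const) (fun _ _ => zero_le_one)
    (hsol.2.1 ▸ one_pos)

theorem g_nonneg (hsol : FwdSol I C₀ a σD α h₀ h f g (Icc 0 b)) (ha : 0 ≤ a) :
    ∀ t ∈ Icc 0 b, 0 ≤ g t :=
  nonneg_of_hasDerivWithinAt_linear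
    (p := fun t => -(2 / α) * g t + (a ^ 2 * σD ^ 2 / (2 * (I : ℝ)) * h t - C₀))
    (q := fun t => a * σD ^ 2 * f t) (fun t ht => (hsol.2.2.2 t ht).2.2.congr_deriv (by ring))
    ((continuousOn_const.mul hsol.continuousOn_g).add
      ((continuousOn_const.mul hsol.continuousOn_h).sub continuousOn_const))
    (fun t ht => mul_nonneg (by positivity) (hsol.f_pos t (Ioo_subset_Icc_self ht)).le)
    hsol.2.2.1.ge

theorem hasDerivWithinAt_sub_h (hsol : FwdSol I C₀ a σD α h₀ h f g s)
    (hsolb : FwdSol I C₀ a σD α hb₀ hb fb gb s) (ht : t ∈ s) :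
    HasDerivWithinAt (fun r => hb r - h r)
      (2 * g t / α * (hb t - h t) + 2 / α * hb t * (gb t - g t)) s t :=
  ((hsolb.2.2.2 t ht).1.sub (hsol.2.2.2 t ht).1).congr_deriv (by ring)

theorem hasDerivWithinAt_sub_f (hsol : FwdSol I C₀ a σD α h₀ h f g s)
    (hsolb : FwdSol I C₀ a σD α hb₀ hb fb gb s) (ht : t ∈ s) :
    HasDerivWithinAt (fun r => fb r - f r)
      ((a ^ 2 * σD ^ 2 / (2 * (I : ℝ)) * h t - C₀) * (fb t - f t) +
        a ^ 2 * σD ^ 2 / (2 * (I : ℝ)) * fb t * (hb t - h t)) s t :=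
  ((hsolb.2.2.2 t ht).2.1.sub (hsol.2.2.2 t ht).2.1).congr_deriv (by ring)

theorem hasDerivWithinAt_sub_g (hsol : FwdSol I C₀ a σD α h₀ h f g s)
    (hsolb : FwdSol I C₀ a σD α hb₀ hb fb gb s) (ht : t ∈ s) :
    HasDerivWithinAt (fun r => gb r - g r)
      ((-(2 / α) * (gb t + g t) + (a ^ 2 * σD ^ 2 / (2 * (I : ℝ)) * h t - C₀)) *
          (gb t - g t) +
        (a * σD ^ 2 * (fb t - f t) +
          a ^ 2 * σD ^ 2 / (2 * (I : ℝ)) * gb t * (hb t - h t))) s t :=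
  ((hsolb.2.2.2 t ht).2.2.sub (hsol.2.2.2 t ht).2.2).congr_deriv (by ring)


theorem sub_h_pos (hsol : FwdSol I C₀ a σD α h₀ h f g (Icc 0 b))
    (hsolb : FwdSol I C₀ a σD α hb₀ hb fb gb (Icc 0 b)) (ha : 0 ≤ a) (hα : 0 ≤ α)
    (hh₀ : 0 < h₀) (hlt : h₀ < hb₀) : ∀ t ∈ Icc 0 b, 0 < hb t - h t := by
  have hb_pos := hsolb.h_pos (hh₀.trans hlt)
  have fb_pos := hsolb.f_pos
  have gb_nonneg := hsolb.g_nonneg ha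
  refine (hsolb.continuousOn_h.sub hsol.continuousOn_h).forall_pos_of_forall_Ico_pos
    (by rw [Pi.sub_apply, hsolb.1, hsol.1]; linarith) fun t₁ ht₁ hu => ?_
  have hsub : Icc 0 t₁ ⊆ Icc 0 b := Icc_subset_Icc le_rfl ht₁.2
  have hsol₁ := hsol.mono hsub
  have hsolb₁ := hsolb.mono hsub
  have hv : ∀ r ∈ Icc 0 t₁, 0 ≤ fb r - f r := by
    refine nonneg_of_hasDerivWithinAt_linear
      (fun r hr => hasDerivWithinAt_sub_f hsol₁ hsolb₁ hr)
      ((continuousOn_const.mul hsol₁.continuousOn_h).sub continuousOn_const) (fun r hr => ?_)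
      (by rw [hsolb.2.1, hsol.2.1, sub_self])
    have := fb_pos r (hsub (Ioo_subset_Icc_self hr))
    have := hu r (Ioo_subset_Ico_self hr)
    positivity
  have hw : ∀ r ∈ Icc 0 t₁, 0 ≤ gb r - g r := by
    refine nonneg_of_hasDerivWithinAt_linear
      (fun r hr => hasDerivWithinAt_sub_g hsol₁ hsolb₁ hr)
      ((continuousOn_const.mul (hsolb₁.continuousOn_g.add hsol₁.continuousOn_g)).add
        ((continuousOn_const.mul hsol₁.continuousOn_h).sub continuousOn_const))
      (fun r hr => ?_) (by rw [hsolb.2.2.1, hsol.2.2.1, sub_self])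
    have := hv r (Ioo_subset_Icc_self hr)
    have := gb_nonneg r (hsub (Ioo_subset_Icc_self hr))
    have := hu r (Ioo_subset_Ico_self hr)
    positivity
  refine pos_of_hasDerivWithinAt_linear (fun r hr => hasDerivWithinAt_sub_h hsol₁ hsolb₁ hr)
    ((continuousOn_const.mul hsol₁.continuousOn_g).div_const α) (fun r hr => ?_)
    (by rw [hsolb.1, hsol.1]; linarith) t₁ (right_mem_Icc.2 ht₁.1.le)
  have := hb_pos r (hsub (Ioo_subset_Icc_self hr))
  have := hw r (Ioo_subset_Icc_self hr)
  positivity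

theorem lt_of_initial_lt (hsol : FwdSol I C₀ a σD α h₀ h f g (Icc 0 b))
    (hsolb : FwdSol I C₀ a σD α hb₀ hb fb gb (Icc 0 b)) (hI : I ≠ 0) (ha : 0 < a)
    (hσD : σD ≠ 0) (hα : 0 ≤ α) (hh₀ : 0 < h₀) (hlt : h₀ < hb₀) :
    ∀ t ∈ Ioc 0 b, h t < hb t ∧ f t < fb t ∧ g t < gb t := by
  have hu := hsol.sub_h_pos hsolb ha.le hα hh₀ hlt
  have fb_pos := hsolb.f_pos
  have gb_nonneg := hsolb.g_nonneg ha.le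
  have hv : ∀ t ∈ Ioc 0 b, 0 < fb t - f t := by
    refine pos_of_hasDerivWithinAt_linear_of_forcing_pos
      (fun r hr => hasDerivWithinAt_sub_f hsol hsolb hr)
      ((continuousOn_const.mul hsol.continuousOn_h).sub continuousOn_const) (fun r hr => ?_)
      (by rw [hsolb.2.1, hsol.2.1, sub_self])
    have := fb_pos r (Ioo_subset_Icc_self hr)
    have := hu r (Ioo_subset_Icc_self hr)
    positivity
  have hw : ∀ t ∈ Ioc 0 b, 0 < gb t - g t := by
    refine pos_of_hasDerivWithinAt_linear_of_forcing_pos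
      (fun r hr => hasDerivWithinAt_sub_g hsol hsolb hr)
      ((continuousOn_const.mul (hsolb.continuousOn_g.add hsol.continuousOn_g)).add
        ((continuousOn_const.mul hsol.continuousOn_h).sub continuousOn_const)) (fun r hr => ?_)
      (by rw [hsolb.2.2.1, hsol.2.2.1, sub_self])
    have := hv r (Ioo_subset_Ioc_self hr)
    have := gb_nonneg r (Ioo_subset_Icc_self hr)
    have := hu r (Ioo_subset_Icc_self hr)
    positivity
  exact fun t ht => ⟨sub_pos.1 (hu t (Ioc_subset_Icc_self ht)), sub_pos.1 (hv t ht),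
    sub_pos.1 (hw t ht)⟩

end FwdSol

theorem stmt8_general (I : ℕ) (hI : 1 ≤ I) (C₀ a σD α : ℝ)
    (ha : 0 < a) (hσD : 0 < σD) (hα : 0 < α)
    (h₀ hb₀ : ℝ) (h1 : 0 < h₀) (h2 : h₀ < hb₀)
    (τ τ' : ℝ)
    (h f g hb fb gb : ℝ → ℝ)
    (hsol : FwdSol I C₀ a σD α h₀ h f g (Ico 0 τ))
    (hsolb : FwdSol I C₀ a σD α hb₀ hb fb gb (Ico 0 τ')) :
    ∀ t : ℝ, 0 < t → t < min τ τ' →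
      h t < hb t ∧ f t < fb t ∧ g t < gb t := by
  intro t ht htmin
  obtain ⟨htτ, htτ'⟩ := lt_min_iff.1 htmin
  exact (hsol.mono (Icc_subset_Ico_right htτ)).lt_of_initial_lt
    (hsolb.mono (Icc_subset_Ico_right htτ')) (by omega) ha hσD.ne' hα.le h1 h2 t ⟨ht, le_rfl⟩

/-- comparison of solutions.  If `0 < h₀ < h̃₀ < k` then the solutions with
initial values `h₀` and `h̃₀` satisfy `h < h̃`, `f < f̃` and `g < g̃` on `(0, τ ∧ τ̃)`. -/
theorem stmt8 (I : ℕ) (hI : 1 ≤ I) (C₀ T a σD α k : ℝ)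
    (hT : 0 < T) (ha : 0 < a) (hσD : 0 < σD) (hα : 0 < α) (hk : 0 < k)
    (h₀ hb₀ : ℝ) (h1 : 0 < h₀) (h2 : h₀ < hb₀) (h3 : hb₀ < k)
    (τ τ' : ℝ) (hτ : 0 < τ) (hτ' : 0 < τ')
    (h f g hb fb gb : ℝ → ℝ)
    (hsol : FwdSol I C₀ a σD α h₀ h f g (Ico 0 τ))
    (hsolb : FwdSol I C₀ a σD α hb₀ hb fb gb (Ico 0 τ')) :
    ∀ t : ℝ, 0 < t → t < min τ τ' →
      h t < hb t ∧ f t < fb t ∧ g t < gb t :=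
  stmt8_general I hI C₀ a σD α ha hσD hα h₀ hb₀ h1 h2 τ τ' h f g hb fb gb hsol hsolb
end
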